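/- Let (B, ⌊·,·⌋, ‖·‖) be a Banach SSD space and f a proper convex lower semicontinuous function on B. Then f is a VZ function ((f−q) ▽ p = 0 on B) if and only if f ≥ q on B and P_q(f) is p-dense in B, i.e., for every c ∈ B, inf_{a ∈ P_q(f)} p(a − c) = 0. -/

import Mathlib

/-!
Taking `b = c` in the infimum shows that a VZ function satisfies `f ≥ q`. Convexity of `f` at
the midpoint gives `q(b - y) ≥ -2((f - q)(b) + (f - q)(y))`, so a near-minimiser `y` of the
infimum at `c = b` is a point with `(f - q)(y) < δ` and `‖b - y‖² ≤ 6δ + 4(f - q)(b)`. Iterating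
with `δ = r²/4ⁿ` produces a Cauchy sequence along which `f - q → 0`; by lower semicontinuity its
limit lies in `P_q(f)`, at distance at most `5r` from `b` when `(f - q)(b) < r²`. Near-minimisers
`b` of the infimum at an arbitrary `c` stay in a bounded set, because convexity along a segment
ending at a fixed point of `P_q(f)` gives `q(a - b) ≥ -(f - q)(b)`; hence the points of `P_q(f)`
near them satisfy `p(a - c) → 0`. Conversely, every `a ∈ P_q(f)` contributes `p(c - a)` to the
infimum at `c`, and every term is nonnegative as soon as `f ≥ q`.
-/

open Filter Topology

def ConvexEReal {E : Type*} [AddCommGroup E] [Module ℝ E] (f : E → EReal) : Prop :=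
  ∀ x y : E, ∀ t : ℝ, 0 ≤ t → t ≤ 1 →
    f (t • x + (1 - t) • y) ≤ (t : EReal) * f x + ((1 - t : ℝ) : EReal) * f y

theorem LowerSemicontinuous.le_of_tendsto {X α ι : Type*} [TopologicalSpace X] [LinearOrder α]
    [DenselyOrdered α] [TopologicalSpace α] [OrderTopology α] {f : X → α}
    (hf : LowerSemicontinuous f) {l : Filter ι} [l.NeBot] {u : ι → X} {a : X}
    (hu : Tendsto u l (𝓝 a)) {g : ι → α} {y : α} (hg : Tendsto g l (𝓝 y))
    (hle : ∀ᶠ i in l, f (u i) ≤ g i) : f a ≤ y := by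
  by_contra! h
  obtain ⟨m, hym, hma⟩ := exists_between h
  obtain ⟨i, hmf, hgm, hfg⟩ :=
    ((hu.eventually (hf a m hma)).and ((hg.eventually (gt_mem_nhds hym)).and hle)).exists
  exact (hmf.trans_le hfg).not_gt hgm

theorem exists_tendsto_dist_le_of_forall_exists_dist_sq_le {X : Type*} [MetricSpace X]
    [CompleteSpace X] {S : Set X} {φ : X → ℝ}
    (hstep : ∀ x ∈ S, ∀ δ > 0, ∃ y ∈ S, φ y < δ ∧ dist x y ^ 2 ≤ 6 * δ + 4 * φ x)
    {x₀ : X} (hx₀ : x₀ ∈ S) {r : ℝ} (hr : 0 < r) (hφ : φ x₀ < r ^ 2) :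
    ∃ a, dist x₀ a ≤ 5 * r ∧
      ∃ u : ℕ → X, (∀ n, u n ∈ S ∧ φ (u n) < r ^ 2 * (1 / 4) ^ n) ∧ Tendsto u atTop (𝓝 a) := by
  choose! next hnext_mem hnext_lt hnext_dist using hstep
  let u : ℕ → X := fun n => Nat.rec x₀ (fun n x => next x (r ^ 2 * (1 / 4) ^ (n + 1))) n
  have hu : ∀ n, u n ∈ S ∧ φ (u n) < r ^ 2 * (1 / 4) ^ n := by
    intro n
    induction n with
    | zero => simpa using ⟨hx₀, hφ⟩
    | succ n ih => exact ⟨hnext_mem _ ih.1 _ (by positivity), hnext_lt _ ih.1 _ (by positivity)⟩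
  -- `6 / 4 + 4 ≤ (5 / 2) ^ 2` gives the ratio `1 / 2` and the constant `5 r / 2`
  have hdist : ∀ n, dist (u n) (u (n + 1)) ≤ 5 * r / 2 * (1 / 2) ^ n := by
    intro n
    have h := hnext_dist _ (hu n).1 (r ^ 2 * (1 / 4) ^ (n + 1)) (by positivity)
    have hsq : (5 * r / 2 * (1 / 2) ^ n) ^ 2 = 25 / 4 * (r ^ 2 * (1 / 4) ^ n) := by
      rw [mul_pow, ← pow_mul, mul_comm n 2, pow_mul]; ring
    have hsucc : r ^ 2 * (1 / 4 : ℝ) ^ (n + 1) = (r ^ 2 * (1 / 4) ^ n) / 4 := by ring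
    refine le_of_pow_le_pow_left₀ two_ne_zero (by positivity) (h.trans ?_)
    rw [hsq, hsucc]
    linarith [(hu n).2, show 0 < r ^ 2 * (1 / 4 : ℝ) ^ n by positivity]
  obtain ⟨a, ha⟩ :=
    cauchySeq_tendsto_of_complete (cauchySeq_of_le_geometric _ _ (by norm_num) hdist)
  refine ⟨a, ?_, u, hu, ha⟩
  calc dist x₀ a = dist (u 0) a := rfl
    _ ≤ 5 * r / 2 / (1 - 1 / 2) := dist_le_of_le_geometric_of_tendsto₀ _ _ (by norm_num) hdist ha
    _ = 5 * r := by ring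

namespace BanachSSD

variable {B : Type*} [NormedAddCommGroup B] [NormedSpace ℝ B] (br : B →ₗ[ℝ] B →ₗ[ℝ] ℝ)

noncomputable def q (b : B) : ℝ := br b b / 2

noncomputable def p (b : B) : ℝ := ‖b‖ ^ 2 / 2 + q br b

variable {br}

lemma q_add (hsym : ∀ b c, br b c = br c b) (x y : B) :
    q br (x + y) = q br x + q br y + br x y := by
  simp only [q, map_add, LinearMap.add_apply, hsym y x]
  ring

lemma q_sub (hsym : ∀ b c, br b c = br c b) (x y : B) :
    q br (x - y) = q br x + q br y - br x y := by
  simp only [q, map_sub, LinearMap.sub_apply, hsym y x]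
  ring

lemma q_smul (t : ℝ) (x : B) : q br (t • x) = t ^ 2 * q br x := by
  simp only [q, map_smul, LinearMap.smul_apply, smul_eq_mul]
  ring

lemma q_smul_add_one_sub_smul (hsym : ∀ b c, br b c = br c b) (t : ℝ) (x y : B) :
    q br (t • x + (1 - t) • y) = t * q br x + (1 - t) * q br y - t * (1 - t) * q br (x - y) := by
  rw [q_add hsym, q_smul, q_smul, q_sub hsym]
  simp only [map_smul, LinearMap.smul_apply, smul_eq_mul]
  ring

lemma abs_q_le (hbd : ∀ b c : B, |br b c| ≤ ‖b‖ * ‖c‖) (x : B) : |q br x| ≤ ‖x‖ ^ 2 / 2 := by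
  rw [q, abs_div, abs_two, sq]
  linarith [hbd x x]

lemma p_nonneg (hbd : ∀ b c : B, |br b c| ≤ ‖b‖ * ‖c‖) (x : B) : 0 ≤ p br x := by
  rw [p]
  linarith [neg_abs_le (q br x), abs_q_le hbd x]

@[simp] lemma p_zero : p br (0 : B) = 0 := by simp [p, q]

lemma p_sub_comm (x y : B) : p br (x - y) = p br (y - x) := by
  rw [← neg_sub, p, p, norm_neg, q, q, map_neg, map_neg, LinearMap.neg_apply, neg_neg]

lemma p_add_le (hsym : ∀ b c, br b c = br c b) (hbd : ∀ b c : B, |br b c| ≤ ‖b‖ * ‖c‖)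
    (x y : B) :
    p br (x + y) ≤ p br y + ‖x‖ ^ 2 + 2 * ‖x‖ * ‖y‖ := by
  have hxy : ‖x + y‖ ^ 2 ≤ (‖x‖ + ‖y‖) ^ 2 := pow_le_pow_left₀ (norm_nonneg _) (norm_add_le x y) 2
  rw [p, p, q_add hsym]
  linarith [(abs_le.mp (abs_q_le hbd x)).2, (abs_le.mp (hbd x y)).2]

lemma continuous_q (hbd : ∀ b c : B, |br b c| ≤ ‖b‖ * ‖c‖) : Continuous (q br) := by
  let brL : B →L[ℝ] B →L[ℝ] ℝ := br.mkContinuous₂ 1 fun x y => by simpa using hbd x y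
  exact ((brL.continuous₂.comp (continuous_id.prodMk continuous_id)).div_const 2 :)
lemma isGLB_image_p_iff (hbd : ∀ b c : B, |br b c| ≤ ‖b‖ * ‖c‖) (S : Set B) (c : B) :
    IsGLB ((fun a => p br (a - c)) '' S) 0 ↔ ∀ ε > 0, ∃ a ∈ S, p br (a - c) < ε := by
  constructor
  · intro h ε hε
    obtain ⟨_, ⟨a, ha, rfl⟩, -, hlt⟩ := h.exists_between hε
    exact ⟨a, ha, hlt⟩
  · refine fun h => ⟨?_, fun l hl => ?_⟩
    · rintro _ ⟨a, -, rfl⟩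
      exact p_nonneg hbd _
    · by_contra! hl0
      obtain ⟨a, ha, hlt⟩ := h l hl0
      exact (hl ⟨a, ha, rfl⟩).not_gt hlt

section ConvexFunction

variable {f : B → EReal}

lemma neg_mul_q_sub_le (hsym : ∀ b c, br b c = br c b) (hfq : ∀ b, (q br b : EReal) ≤ f b)
    (hconv : ConvexEReal f)
    {x y : B} {u v t : ℝ} (hx : f x = ↑(q br x + u)) (hy : f y = ↑(q br y + v))
    (ht0 : 0 ≤ t) (ht1 : t ≤ 1) :
    -(t * (1 - t) * q br (x - y)) ≤ t * u + (1 - t) * v := by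
  have h := (hfq _).trans (hconv x y t ht0 ht1)
  rw [hx, hy, q_smul_add_one_sub_smul hsym] at h
  norm_cast at h
  linarith

lemma neg_two_mul_le_q_sub (hsym : ∀ b c, br b c = br c b) (hfq : ∀ b, (q br b : EReal) ≤ f b)
    (hconv : ConvexEReal f)
    {x y : B} {u v : ℝ} (hx : f x = ↑(q br x + u)) (hy : f y = ↑(q br y + v)) :
    -(2 * (u + v)) ≤ q br (x - y) := by
  have h := neg_mul_q_sub_le hsym hfq hconv hx hy (t := 1 / 2) (by norm_num) (by norm_num)
  linarith

lemma neg_le_q_sub_of_eq_q (hsym : ∀ b c, br b c = br c b) (hfq : ∀ b, (q br b : EReal) ≤ f b)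
    (hconv : ConvexEReal f)
    {x y : B} {v : ℝ} (hx : f x = q br x) (hy : f y = ↑(q br y + v)) :
    -v ≤ q br (x - y) := by
  have hx' : f x = ↑(q br x + 0) := by rw [add_zero, hx]
  -- the convexity inequality at `t`, divided by `1 - t`, reads `-t q(x - y) ≤ v`; let `t → 1`
  have hlim : Tendsto (fun t : ℝ => -(t * q br (x - y))) (𝓝[<] 1) (𝓝 (-(1 * q br (x - y)))) :=
    ((continuous_id.mul continuous_const).neg.tendsto 1).mono_left nhdsWithin_le_nhds
  have hle : ∀ᶠ t in 𝓝[<] (1 : ℝ), -(t * q br (x - y)) ≤ v := by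
    filter_upwards [Ioo_mem_nhdsLT (show (0 : ℝ) < 1 by norm_num)] with t ht
    have h := neg_mul_q_sub_le hsym hfq hconv hx' hy ht.1.le ht.2.le
    have h1t : 0 < 1 - t := sub_pos.mpr ht.2
    nlinarith
  have h := le_of_tendsto hlim hle
  rw [one_mul] at h
  linarith

lemma excess_nonneg (hfq : ∀ b, (q br b : EReal) ≤ f b) {x : B} {u : ℝ}
    (hx : f x = ↑(q br x + u)) : 0 ≤ u := by
  have h := hfq x
  rw [hx, EReal.coe_le_coe_iff] at h
  linarith

lemma sub_q_add_p_eq {b : B} {u : ℝ} (hb : f b = ↑(q br b + u)) (c : B) :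
    f b - q br b + p br (c - b) = ↑(u + p br (c - b)) := by
  rw [hb, ← EReal.coe_sub, ← EReal.coe_add, add_sub_cancel_left]

lemma exists_eq_coe_q_add (hfq : ∀ b, (q br b : EReal) ≤ f b) {b : B} (htop : f b ≠ ⊤) :
    ∃ u : ℝ, f b = ↑(q br b + u) :=
  ⟨(f b).toReal - q br b, by
    rw [add_sub_cancel, EReal.coe_toReal htop (ne_bot_of_le_ne_bot (EReal.coe_ne_bot _) (hfq b))]⟩

-- `((f - q) ▽ p)(c) = 0` for every `c`, with the inf-convolution written out
variable (br f) in
def IsVZ : Prop := ∀ c : B, ⨅ b : B, f b - q br b + p br (c - b) = 0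

lemma isVZ_iff (hbd : ∀ b c : B, |br b c| ≤ ‖b‖ * ‖c‖) :
    IsVZ br f ↔ (∀ b, (q br b : EReal) ≤ f b) ∧
      ∀ c, ∀ ε > 0, ∃ b u, f b = ↑(q br b + u) ∧ u + p br (c - b) < ε := by
  constructor
  · intro hvz
    have hfq : ∀ b, (q br b : EReal) ≤ f b := by
      intro b
      have h : 0 ≤ f b - q br b := by simpa using (hvz b).ge.trans (iInf_le _ b)
      exact (EReal.sub_nonneg (.inr (EReal.coe_ne_top _)) (.inr (EReal.coe_ne_bot _))).mp h
    refine ⟨hfq, fun c ε hε => ?_⟩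
    have hlt : ⨅ b, f b - q br b + p br (c - b) < (ε : EReal) := by
      rw [hvz c]; exact_mod_cast hε
    obtain ⟨b, hb⟩ := iInf_lt_iff.mp hlt
    have htop : f b ≠ ⊤ := by
      rintro h
      rw [h, EReal.top_sub_coe, EReal.top_add_coe] at hb
      exact not_top_lt hb
    obtain ⟨u, hu⟩ := exists_eq_coe_q_add hfq htop
    rw [sub_q_add_p_eq hu] at hb
    exact ⟨b, u, hu, mod_cast hb⟩
  · rintro ⟨hfq, hvz⟩ c
    refine le_antisymm (EReal.le_of_forall_lt_iff_le.mp fun ε hε => ?_) (le_iInf fun b => ?_)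
    · obtain ⟨b, u, hu, hlt⟩ := hvz c ε (mod_cast hε)
      refine (iInf_le _ b).trans ?_
      rw [sub_q_add_p_eq hu]
      exact_mod_cast hlt.le
    · obtain htop | htop := eq_or_ne (f b) ⊤
      · simp [htop]
      obtain ⟨u, hu⟩ := exists_eq_coe_q_add hfq htop
      rw [sub_q_add_p_eq hu]
      exact_mod_cast add_nonneg (excess_nonneg hfq hu) (p_nonneg hbd (c - b))

lemma norm_sub_le_of_eq_q (hsym : ∀ b c, br b c = br c b) (hbd : ∀ b c : B, |br b c| ≤ ‖b‖ * ‖c‖)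
    (hfq : ∀ b, (q br b : EReal) ≤ f b)
    (hconv : ConvexEReal f)
    {a b c : B} {u : ℝ} (ha : f a = q br a) (hb : f b = ↑(q br b + u)) (hu : u ≤ 1)
    (hp : p br (c - b) ≤ 1) :
    ‖c - b‖ ≤ 3 * ‖a - c‖ + 2 := by
  have h := neg_le_q_sub_of_eq_q hsym hfq hconv ha hb
  rw [show a - b = (a - c) + (c - b) by abel, q_add hsym] at h
  rw [p] at hp
  have hq := (abs_le.mp (abs_q_le hbd (a - c))).2
  have hbr := (abs_le.mp (hbd (a - c) (c - b))).2
  nlinarith [norm_nonneg (a - c), norm_nonneg (c - b)]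

lemma exists_eq_q_norm_sub_le [CompleteSpace B] (hsym : ∀ b c, br b c = br c b)
    (hbd : ∀ b c : B, |br b c| ≤ ‖b‖ * ‖c‖) (hfq : ∀ b, (q br b : EReal) ≤ f b)
    (hconv : ConvexEReal f)
    (hlsc : LowerSemicontinuous f)
    (hvz : ∀ c, ∀ ε > 0, ∃ b u, f b = ↑(q br b + u) ∧ u + p br (c - b) < ε)
    {b : B} {u r : ℝ} (hb : f b = ↑(q br b + u)) (hr : 0 < r) (hu : u < r ^ 2) :
    ∃ a, f a = q br a ∧ ‖b - a‖ ≤ 5 * r := by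
  set S : Set B := {x | ∃ v : ℝ, f x = ↑(q br x + v)}
  set φ : B → ℝ := fun x => (f x).toReal - q br x
  have hφ : ∀ {x v}, f x = ↑(q br x + v) → φ x = v := fun {x v} hx => by
    change (f x).toReal - q br x = v
    rw [hx, EReal.toReal_coe, add_sub_cancel_left]
  have hstep : ∀ x ∈ S, ∀ δ > 0, ∃ y ∈ S, φ y < δ ∧ dist x y ^ 2 ≤ 6 * δ + 4 * φ x := by
    rintro x ⟨v, hx⟩ δ hδ
    obtain ⟨y, w, hy, hlt⟩ := hvz x δ hδ
    have hmid := neg_two_mul_le_q_sub hsym hfq hconv hx hy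
    have hw := excess_nonneg hfq hy
    have hp := p_nonneg hbd (x - y)
    refine ⟨y, ⟨w, hy⟩, by rw [hφ hy]; linarith, ?_⟩
    rw [dist_eq_norm, hφ hx]
    rw [p] at hlt hp
    linarith
  obtain ⟨a, hba, x, hx, hxa⟩ :=
    exists_tendsto_dist_le_of_forall_exists_dist_sq_le hstep ⟨u, hb⟩ hr (by rwa [hφ hb])
  refine ⟨a, le_antisymm ?_ (hfq a), by rwa [← dist_eq_norm]⟩
  have hlim : Tendsto (fun n => q br (x n) + r ^ 2 * (1 / 4 : ℝ) ^ n) atTop (𝓝 (q br a)) := by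
    have hgeom := (tendsto_pow_atTop_nhds_zero_of_lt_one (r := (1 / 4 : ℝ)) (by norm_num)
      (by norm_num)).const_mul (r ^ 2)
    simpa using (((continuous_q hbd).tendsto a).comp hxa).add hgeom
  refine hlsc.le_of_tendsto hxa (EReal.tendsto_coe.mpr hlim) (Eventually.of_forall fun n => ?_)
  obtain ⟨⟨v, hv⟩, hφn⟩ := hx n
  rw [hv, EReal.coe_le_coe_iff]
  rw [hφ hv] at hφn
  linarith

lemma exists_eq_q_p_sub_lt [CompleteSpace B] (hsym : ∀ b c, br b c = br c b)
    (hbd : ∀ b c : B, |br b c| ≤ ‖b‖ * ‖c‖) (hfq : ∀ b, (q br b : EReal) ≤ f b)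
    (hconv : ConvexEReal f)
    (hlsc : LowerSemicontinuous f)
    (hvz : ∀ c, ∀ ε > 0, ∃ b u, f b = ↑(q br b + u) ∧ u + p br (c - b) < ε)
    (c : B) {ε : ℝ} (hε : 0 < ε) :
    ∃ a, f a = q br a ∧ p br (a - c) < ε := by
  obtain ⟨b₀, u₀, hb₀, -⟩ := hvz c 1 one_pos
  obtain ⟨a₀, ha₀, -⟩ := exists_eq_q_norm_sub_le hsym hbd hfq hconv hlsc hvz hb₀
    (r := |u₀| + 1) (by positivity) (by nlinarith [le_abs_self u₀, abs_nonneg u₀])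
  -- a point `b` with `(f - q)(b) + p(c - b) < s²` stays within `R` of `c`, so the point of
  -- `P_q(f)` found within `5 s` of `b` has `p(a - c) ≤ 26 s² + 10 R s`
  set R := 3 * ‖a₀ - c‖ + 2
  set s := min 1 (ε / (2 * (26 + 10 * R)))
  have hR : 0 ≤ R := by positivity
  have hs0 : 0 < s := lt_min one_pos (by positivity)
  have hs1 : s ≤ 1 := min_le_left _ _
  have hsε : (26 + 10 * R) * s ≤ ε / 2 := by
    rw [← le_div_iff₀' (by positivity), div_div]
    exact min_le_right _ _
  obtain ⟨b, u, hb, hbc⟩ := hvz c (s ^ 2) (by positivity)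
  have hu := excess_nonneg hfq hb
  have hp := p_nonneg hbd (c - b)
  have hcb : ‖c - b‖ ≤ R :=
    norm_sub_le_of_eq_q hsym hbd hfq hconv ha₀ hb (by nlinarith) (by nlinarith)
  obtain ⟨a, ha, hab⟩ := exists_eq_q_norm_sub_le hsym hbd hfq hconv hlsc hvz hb hs0 (by linarith)
  refine ⟨a, ha, ?_⟩
  rw [norm_sub_rev] at hab hcb
  calc p br (a - c) = p br ((a - b) + (b - c)) := by rw [sub_add_sub_cancel]
    _ ≤ p br (b - c) + ‖a - b‖ ^ 2 + 2 * ‖a - b‖ * ‖b - c‖ := p_add_le hsym hbd _ _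
    _ ≤ s ^ 2 + (5 * s) ^ 2 + 2 * (5 * s) * R := by
        rw [p_sub_comm]
        gcongr
        linarith
    _ ≤ (26 + 10 * R) * s := by nlinarith
    _ < ε := by linarith

end ConvexFunction

end BanachSSD

theorem stmt_17_general (B : Type*) [NormedAddCommGroup B] [NormedSpace ℝ B] [CompleteSpace B]
    (br : B →ₗ[ℝ] B →ₗ[ℝ] ℝ) (hsym : ∀ b c, br b c = br c b)
    (hbd : ∀ b c : B, |br b c| ≤ ‖b‖ * ‖c‖)
    (q : B → ℝ) (hq : ∀ b, q b = br b b / 2)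
    (p : B → ℝ) (hp : ∀ b, p b = ‖b‖ ^ 2 / 2 + q b)
    (f : B → EReal)
    (hconv : ∀ x y : B, ∀ t : ℝ, 0 ≤ t → t ≤ 1 →
      f (t • x + (1 - t) • y) ≤ (t : EReal) * f x + ((1 - t : ℝ) : EReal) * f y)
    (hlsc : LowerSemicontinuous f) :
    (∀ c : B, (⨅ b : B, (f b - (q b : EReal) + (p (c - b) : EReal))) = 0) ↔
      ((∀ b : B, (q b : EReal) ≤ f b) ∧
        ∀ c : B, IsGLB ((fun a => p (a - c)) '' {b : B | f b = (q b : EReal)}) 0) := by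
  obtain rfl : q = BanachSSD.q br := funext hq
  obtain rfl : p = BanachSSD.p br := funext hp
  simp only [BanachSSD.isGLB_image_p_iff hbd]
  refine (BanachSSD.isVZ_iff hbd).trans ⟨fun ⟨hfq, hvz⟩ => ⟨hfq, fun c ε hε => ?_⟩,
    fun ⟨hfq, hdense⟩ => ⟨hfq, fun c ε hε => ?_⟩⟩
  · exact BanachSSD.exists_eq_q_p_sub_lt hsym hbd hfq hconv hlsc hvz c hε
  · obtain ⟨a, ha, hlt⟩ := hdense c ε hε
    exact ⟨a, 0, by rwa [add_zero], by rwa [zero_add, BanachSSD.p_sub_comm]⟩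

theorem stmt_17 (B : Type*) [NormedAddCommGroup B] [NormedSpace ℝ B] [CompleteSpace B]
    (hB : ∃ b : B, b ≠ 0)
    (br : B →ₗ[ℝ] B →ₗ[ℝ] ℝ) (hsym : ∀ b c, br b c = br c b)
    (hbd : ∀ b c : B, |br b c| ≤ ‖b‖ * ‖c‖)
    (q : B → ℝ) (hq : ∀ b, q b = br b b / 2)
    (p : B → ℝ) (hp : ∀ b, p b = ‖b‖ ^ 2 / 2 + q b)
    (f : B → EReal) (hproper : ∃ b, f b ≠ ⊤) (hreal : ∀ b, f b ≠ ⊥)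
    (hconv : ∀ x y : B, ∀ t : ℝ, 0 ≤ t → t ≤ 1 →
      f (t • x + (1 - t) • y) ≤ (t : EReal) * f x + ((1 - t : ℝ) : EReal) * f y)
    (hlsc : LowerSemicontinuous f) :
    (∀ c : B, (⨅ b : B, (f b - (q b : EReal) + (p (c - b) : EReal))) = 0) ↔
      ((∀ b : B, (q b : EReal) ≤ f b) ∧
        ∀ c : B, IsGLB ((fun a => p (a - c)) '' {b : B | f b = (q b : EReal)}) 0) :=
  stmt_17_general B br hsym hbd q hq p hp f hconv hlsc
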